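/- Let g = 2, M a Klingen parabolic matrix, and N a Siegel parabolic matrix with ε(N) = det(D_N) > 0. Then w(M,N) = 0. -/

import Mathlib

open Matrix Complex

noncomputable section

/-- The space of `2g × 2g` real matrices (symplectic candidates). -/
abbrev SpMat (g : ℕ) := Matrix (Fin g ⊕ Fin g) (Fin g ⊕ Fin g) ℝ

/-- The Siegel upper half plane of genus `g`: symmetric complex matrices with
positive definite imaginary part. -/
def SiegelUHP (g : ℕ) : Set (Matrix (Fin g) (Fin g) ℂ) :=
  {Z | Z.IsSymm ∧ Matrix.PosDef (Matrix.of fun i j => (Z i j).im)}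

/-- Coercion of a real matrix to a complex matrix. -/
def cmat {g : ℕ} (A : Matrix (Fin g) (Fin g) ℝ) : Matrix (Fin g) (Fin g) ℂ :=
  A.map (fun x => (x : ℂ))

/-- The automorphy factor `J(M,Z) = det (C Z + D)`. -/
def Jfac {g : ℕ} (M : SpMat g) (Z : Matrix (Fin g) (Fin g) ℂ) : ℂ :=
  (cmat M.toBlocks₂₁ * Z + cmat M.toBlocks₂₂).det

/-- The action `M⟨Z⟩ = (A Z + B)(C Z + D)⁻¹` on the Siegel upper half plane. -/
def spAct {g : ℕ} (M : SpMat g) (Z : Matrix (Fin g) (Fin g) ℂ) :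
    Matrix (Fin g) (Fin g) ℂ :=
  (cmat M.toBlocks₁₁ * Z + cmat M.toBlocks₁₂) *
    (cmat M.toBlocks₂₁ * Z + cmat M.toBlocks₂₂)⁻¹

/-- The base point `i·E` of the Siegel upper half plane. -/
def iE (g : ℕ) : Matrix (Fin g) (Fin g) ℂ := Complex.I • 1

/-- `L` is a continuous branch of `arg J(M, ·)` on the Siegel upper half plane,
normalized to the principal value at `Z = iE`. -/
def IsArgBranch (g : ℕ) (L : SpMat g → Matrix (Fin g) (Fin g) ℂ → ℝ) : Prop :=
  (∀ M ∈ Matrix.symplecticGroup (Fin g) ℝ, ContinuousOn (L M) (SiegelUHP g)) ∧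
  (∀ M ∈ Matrix.symplecticGroup (Fin g) ℝ, ∀ Z ∈ SiegelUHP g,
      (‖Jfac M Z‖ : ℂ) * Complex.exp (Complex.I * (L M Z)) = Jfac M Z) ∧
  (∀ M ∈ Matrix.symplecticGroup (Fin g) ℝ, L M (iE g) = Complex.arg (Jfac M (iE g)))

/-- The cocycle `w(M,N) = (1/2π)(L(MN,Z) - L(M,NZ) - L(N,Z))`, evaluated at the
base point `Z = iE` (it is independent of `Z`). -/
def wcoc {g : ℕ} (L : SpMat g → Matrix (Fin g) (Fin g) ℂ → ℝ) (M N : SpMat g) : ℝ :=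
  (L (M * N) (iE g) - L M (spAct N (iE g)) - L N (iE g)) / (2 * Real.pi)

/-- Membership in the first Klingen parabolic group of `Sp(2,ℝ)`: rows have the
pattern `(a₁,0,b₁,b₂),(a₃,a₄,b₃,b₄),(c₁,0,d₁,d₂),(0,0,0,d₄)`. -/
def KlingenFirst (M : SpMat 2) : Prop :=
  M (.inl 0) (.inl 1) = 0 ∧ M (.inr 0) (.inl 1) = 0 ∧
  M (.inr 1) (.inl 0) = 0 ∧ M (.inr 1) (.inl 1) = 0 ∧ M (.inr 1) (.inr 0) = 0

/-- Membership in the second Klingen parabolic group of `Sp(2,ℝ)`: rows have the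
pattern `(a₁,a₂,b₁,b₂),(0,a₄,b₃,b₄),(0,0,d₁,0),(0,c₄,d₃,d₄)`. -/
def KlingenSecond (M : SpMat 2) : Prop :=
  M (.inl 1) (.inl 0) = 0 ∧ M (.inr 0) (.inl 0) = 0 ∧
  M (.inr 0) (.inl 1) = 0 ∧ M (.inr 0) (.inr 1) = 0 ∧ M (.inr 1) (.inl 0) = 0

/-!
For Siegel parabolic `N` one has `J(N, Z) = det D_N` and `J(MN, Z) = J(M, N⟨Z⟩) · det D_N`; when
`det D_N > 0` neither factor changes the principal argument. It remains to see that the branch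
`L(M, ·)` is the principal argument of `J(M, ·)` on all of the Siegel upper half plane. For Klingen
`M`, `J(M, Z)` is either a nonzero real constant or has imaginary part `c d Im z` with `c d ≠ 0`, so
its principal argument is continuous there; two continuous arguments of the same function on a
connected set that agree at `iE` coincide.
-/

section RealToComplex

variable {g : ℕ}

@[simp] lemma cmat_zero : cmat (0 : Matrix (Fin g) (Fin g) ℝ) = 0 := by
  simp [cmat]

@[simp] lemma cmat_one : cmat (1 : Matrix (Fin g) (Fin g) ℝ) = 1 := by
  simp [cmat]

lemma cmat_add (A B : Matrix (Fin g) (Fin g) ℝ) : cmat (A + B) = cmat A + cmat B :=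
  Matrix.map_add _ Complex.ofReal_add A B

lemma cmat_mul (A B : Matrix (Fin g) (Fin g) ℝ) : cmat (A * B) = cmat A * cmat B :=
  Matrix.map_mul (f := Complex.ofRealHom)

lemma cmat_transpose (A : Matrix (Fin g) (Fin g) ℝ) : cmat Aᵀ = (cmat A)ᵀ :=
  Matrix.transpose_map

lemma det_cmat (A : Matrix (Fin g) (Fin g) ℝ) : (cmat A).det = A.det :=
  (Complex.ofRealHom.map_det A).symm

end RealToComplex

section SiegelUpperHalfPlane

variable {g : ℕ}

lemma convex_siegelUHP : Convex ℝ (SiegelUHP g) := by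
  intro Z hZ W hW a b ha hb hab
  refine ⟨by simp only [IsSymm, transpose_add, transpose_smul, hZ.1.eq, hW.1.eq], ?_⟩
  have him : (Matrix.of fun i j => ((a • Z + b • W) i j).im)
      = a • Matrix.of (fun i j => (Z i j).im) + b • Matrix.of (fun i j => (W i j).im) := by
    ext i j
    simp
  rw [him]
  rcases ha.eq_or_lt with rfl | ha
  · simpa [show b = 1 by linarith] using hW.2
  · exact (hZ.2.smul ha).add_posSemidef (hW.2.posSemidef.smul hb)

lemma iE_mem_siegelUHP : iE g ∈ SiegelUHP g := by
  refine ⟨by simp [iE, IsSymm], ?_⟩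
  convert PosDef.one (n := Fin g) (R := ℝ)
  ext i j
  by_cases h : i = j <;> simp [iE, Matrix.one_apply, h]

end SiegelUpperHalfPlane

section SiegelParabolic

variable {g : ℕ} {N : SpMat g}

lemma Jfac_of_toBlocks₂₁_eq_zero (hC : N.toBlocks₂₁ = 0) (Z : Matrix (Fin g) (Fin g) ℂ) :
    Jfac N Z = N.toBlocks₂₂.det := by
  rw [Jfac, hC, cmat_zero, Matrix.zero_mul, zero_add, det_cmat]

lemma Jfac_mul_of_toBlocks₂₁_eq_zero (M : SpMat g) (hC : N.toBlocks₂₁ = 0)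
    (hD : IsUnit N.toBlocks₂₂.det) (Z : Matrix (Fin g) (Fin g) ℂ) :
    Jfac (M * N) Z = Jfac M (spAct N Z) * N.toBlocks₂₂.det := by
  have hD' : IsUnit (cmat N.toBlocks₂₂).det := by
    rw [det_cmat]; exact hD.map Complex.ofRealHom
  have hblocks : (M * N).toBlocks₂₁ = M.toBlocks₂₁ * N.toBlocks₁₁ ∧
      (M * N).toBlocks₂₂ = M.toBlocks₂₁ * N.toBlocks₁₂ + M.toBlocks₂₂ * N.toBlocks₂₂ := by
    rw [← fromBlocks_toBlocks M, ← fromBlocks_toBlocks N, fromBlocks_multiply]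
    simp [hC]
  rw [Jfac, Jfac, spAct, hC, cmat_zero, Matrix.zero_mul, zero_add, ← det_cmat, ← det_mul,
    add_mul, Matrix.mul_assoc, Matrix.mul_assoc, nonsing_inv_mul _ hD', Matrix.mul_one,
    hblocks.1, hblocks.2]
  simp only [cmat_add, cmat_mul, Matrix.mul_add, Matrix.mul_assoc]
  rw [add_assoc]

lemma symplectic_relations_of_toBlocks₂₁_eq_zero (hN : N ∈ symplecticGroup (Fin g) ℝ)
    (hC : N.toBlocks₂₁ = 0) :
    N.toBlocks₁₁ᵀ * N.toBlocks₂₂ = 1 ∧ N.toBlocks₁₁ * N.toBlocks₂₂ᵀ = 1 ∧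
      N.toBlocks₁₂ * N.toBlocks₁₁ᵀ = N.toBlocks₁₁ * N.toBlocks₁₂ᵀ := by
  have hN' := SymplecticGroup.transpose_mem hN
  rw [← fromBlocks_toBlocks N, hC] at hN hN'
  rw [fromBlocks_transpose, transpose_zero] at hN'
  obtain ⟨-, -, h⟩ := SymplecticGroup.fromBlocks_mem_iff.mp hN
  obtain ⟨h', -, h''⟩ := SymplecticGroup.fromBlocks_mem_iff.mp hN'
  simp only [transpose_zero, transpose_transpose, Matrix.zero_mul, Matrix.mul_zero,
    sub_zero] at h h' h''
  exact ⟨h, h'', h'.symm⟩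

lemma isUnit_det_toBlocks₂₂_of_toBlocks₂₁_eq_zero (hN : N ∈ symplecticGroup (Fin g) ℝ)
    (hC : N.toBlocks₂₁ = 0) : IsUnit N.toBlocks₂₂.det :=
  IsUnit.of_mul_eq_one_right _ <| by
    simpa using congrArg det (symplectic_relations_of_toBlocks₂₁_eq_zero hN hC).1

lemma spAct_iE_of_toBlocks₂₁_eq_zero (hN : N ∈ symplecticGroup (Fin g) ℝ)
    (hC : N.toBlocks₂₁ = 0) :
    spAct N (iE g) = Complex.I • cmat (N.toBlocks₁₁ * N.toBlocks₁₁ᵀ)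
      + cmat (N.toBlocks₁₂ * N.toBlocks₁₁ᵀ) := by
  have hinv : (cmat N.toBlocks₂₂)⁻¹ = cmat N.toBlocks₁₁ᵀ := by
    refine inv_eq_left_inv ?_
    rw [← cmat_mul, (symplectic_relations_of_toBlocks₂₁_eq_zero hN hC).1, cmat_one]
  rw [spAct, hC, cmat_zero, Matrix.zero_mul, zero_add, hinv, iE, Matrix.mul_smul,
    Matrix.mul_one, add_mul, smul_mul, cmat_mul, cmat_mul]

lemma spAct_iE_mem_siegelUHP (hN : N ∈ symplecticGroup (Fin g) ℝ) (hC : N.toBlocks₂₁ = 0) :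
    spAct N (iE g) ∈ SiegelUHP g := by
  obtain ⟨-, hAD, hBA⟩ := symplectic_relations_of_toBlocks₂₁_eq_zero hN hC
  rw [spAct_iE_of_toBlocks₂₁_eq_zero hN hC]
  refine ⟨?_, ?_⟩
  · simp only [IsSymm, transpose_add, transpose_smul, ← cmat_transpose, transpose_mul,
      transpose_transpose, hBA]
  · have hA : IsUnit N.toBlocks₁₁ := IsUnit.of_mul_eq_one _ hAD
    convert PosDef.mul_conjTranspose_self N.toBlocks₁₁ (vecMul_injective_of_isUnit hA)
    ext i j
    simp [cmat]

end SiegelParabolic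

lemma sub_arg_mem_zmultiples {w : ℂ} {θ : ℝ} (hw : w ≠ 0)
    (h : (‖w‖ : ℂ) * Complex.exp (Complex.I * θ) = w) :
    θ - arg w ∈ AddSubgroup.zmultiples (2 * Real.pi) := by
  have harg : arg w = toIocMod Real.two_pi_pos (-Real.pi) θ := by
    rw [← h, arg_real_mul _ (norm_pos_iff.mpr hw), mul_comm, arg_exp_mul_I]
  rw [harg, self_sub_toIocMod]
  exact AddSubgroup.zsmul_mem_zmultiples _ _

section ArgBranch

variable {g : ℕ} {L : SpMat g → Matrix (Fin g) (Fin g) ℂ → ℝ} {M : SpMat g}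

lemma IsArgBranch.eqOn_arg (hL : IsArgBranch g L) (hM : M ∈ symplecticGroup (Fin g) ℝ)
    (hcont : ContinuousOn (fun Z => arg (Jfac M Z)) (SiegelUHP g))
    (hne : ∀ Z ∈ SiegelUHP g, Jfac M Z ≠ 0) :
    Set.EqOn (L M) (fun Z => arg (Jfac M Z)) (SiegelUHP g) := by
  intro Z hZ
  have hdiscrete : IsDiscrete (AddSubgroup.zmultiples (2 * Real.pi) : Set ℝ) :=
    isDiscrete_iff_discreteTopology.mpr
      (inferInstanceAs (DiscreteTopology (AddSubgroup.zmultiples (2 * Real.pi))))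
  have hconst := convex_siegelUHP.isPreconnected.constant_of_mapsTo hdiscrete
    ((hL.1 M hM).sub hcont) (fun W hW => sub_arg_mem_zmultiples (hne W hW) (hL.2.1 M hM W hW))
    hZ iE_mem_siegelUHP
  simpa [hL.2.2 M hM, sub_eq_zero] using hconst

lemma continuousOn_arg_Jfac_of_im_ne_zero (him : ∀ Z ∈ SiegelUHP g, (Jfac M Z).im ≠ 0) :
    ContinuousOn (fun Z => arg (Jfac M Z)) (SiegelUHP g) := by
  have hJ : Continuous (Jfac M) := by unfold Jfac; fun_prop
  exact fun Z hZ => ((continuousAt_arg (Or.inr (him Z hZ))).comp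
    hJ.continuousAt).continuousWithinAt

lemma IsArgBranch.eqOn_arg_of_toBlocks₂₁_eq_zero_or_im_ne_zero (hL : IsArgBranch g L)
    (hM : M ∈ symplecticGroup (Fin g) ℝ)
    (h : M.toBlocks₂₁ = 0 ∨ ∀ Z ∈ SiegelUHP g, (Jfac M Z).im ≠ 0) :
    Set.EqOn (L M) (fun Z => arg (Jfac M Z)) (SiegelUHP g) := by
  rcases h with hC | him
  · have hJ : Jfac M = fun _ => (M.toBlocks₂₂.det : ℂ) := funext (Jfac_of_toBlocks₂₁_eq_zero hC)
    have hD := isUnit_det_toBlocks₂₂_of_toBlocks₂₁_eq_zero hM hC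
    refine hL.eqOn_arg hM (by rw [hJ]; exact continuousOn_const) fun Z _ => ?_
    rw [hJ]
    exact ofReal_ne_zero.mpr hD.ne_zero
  · exact hL.eqOn_arg hM (continuousOn_arg_Jfac_of_im_ne_zero him)
      fun Z hZ hJ => him Z hZ (by rw [hJ, zero_im])

end ArgBranch

section Klingen

variable {M : SpMat 2}

lemma KlingenFirst.im_Jfac (h : KlingenFirst M) (Z : Matrix (Fin 2) (Fin 2) ℂ) :
    (Jfac M Z).im = M (.inr 0) (.inl 0) * (Z 0 0).im * M (.inr 1) (.inr 1) := by
  obtain ⟨-, h₂, h₃, h₄, h₅⟩ := h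
  simp [Jfac, det_fin_two, cmat, mul_apply, Fin.sum_univ_two, toBlocks₂₁, toBlocks₂₂,
    h₂, h₃, h₄, h₅]

lemma KlingenSecond.im_Jfac (h : KlingenSecond M) (Z : Matrix (Fin 2) (Fin 2) ℂ) :
    (Jfac M Z).im = M (.inr 0) (.inr 0) * (M (.inr 1) (.inl 1) * (Z 1 1).im) := by
  obtain ⟨-, h₂, h₃, h₄, h₅⟩ := h
  simp [Jfac, det_fin_two, cmat, mul_apply, Fin.sum_univ_two, toBlocks₂₁, toBlocks₂₂,
    h₂, h₃, h₄, h₅]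

lemma KlingenFirst.toBlocks₂₁_eq_zero_or_im_Jfac_ne_zero (hM : M ∈ symplecticGroup (Fin 2) ℝ)
    (h : KlingenFirst M) :
    M.toBlocks₂₁ = 0 ∨ ∀ Z ∈ SiegelUHP 2, (Jfac M Z).im ≠ 0 := by
  by_cases hc : M (.inr 0) (.inl 0) = 0
  · left
    ext i j
    fin_cases i <;> fin_cases j <;> simp [toBlocks₂₁, hc, h.2.1, h.2.2.1, h.2.2.2.1]
  · right
    have hd : M (.inr 1) (.inr 1) ≠ 0 := fun h0 =>
      (SymplecticGroup.symplectic_det hM).ne_zero <| det_eq_zero_of_row_eq_zero (.inr 1) <| by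
        rintro (j | j) <;> fin_cases j <;> simp [h.2.2.1, h.2.2.2.1, h.2.2.2.2, h0]
    intro Z hZ
    rw [h.im_Jfac]
    exact mul_ne_zero (mul_ne_zero hc (hZ.2.diag_pos (i := 0)).ne') hd

lemma KlingenSecond.toBlocks₂₁_eq_zero_or_im_Jfac_ne_zero (hM : M ∈ symplecticGroup (Fin 2) ℝ)
    (h : KlingenSecond M) :
    M.toBlocks₂₁ = 0 ∨ ∀ Z ∈ SiegelUHP 2, (Jfac M Z).im ≠ 0 := by
  by_cases hc : M (.inr 1) (.inl 1) = 0
  · left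
    ext i j
    fin_cases i <;> fin_cases j <;> simp [toBlocks₂₁, hc, h.2.1, h.2.2.1, h.2.2.2.2]
  · right
    have hd : M (.inr 0) (.inr 0) ≠ 0 := fun h0 =>
      (SymplecticGroup.symplectic_det hM).ne_zero <| det_eq_zero_of_row_eq_zero (.inr 0) <| by
        rintro (j | j) <;> fin_cases j <;> simp [h.2.1, h.2.2.1, h.2.2.2.1, h0]
    intro Z hZ
    rw [h.im_Jfac]
    exact mul_ne_zero hd (mul_ne_zero hc (hZ.2.diag_pos (i := 1)).ne')

end Klingen

/-- For `g = 2`, `M` Klingen parabolic and `N` Siegel parabolic with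
`ε(N) = det D_N > 0`, one has `w(M,N) = 0`. -/
theorem w_klingen_siegel
    (L : SpMat 2 → Matrix (Fin 2) (Fin 2) ℂ → ℝ) (hL : IsArgBranch 2 L)
    (M : SpMat 2) (hM : M ∈ Matrix.symplecticGroup (Fin 2) ℝ)
    (hMK : KlingenFirst M ∨ KlingenSecond M)
    (N : SpMat 2) (hN : N ∈ Matrix.symplecticGroup (Fin 2) ℝ)
    (hNpar : N.toBlocks₂₁ = 0) (hNeps : 0 < N.toBlocks₂₂.det) :
    wcoc L M N = 0 := by
  have hLN : L N (iE 2) = 0 := by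
    rw [hL.2.2 N hN, Jfac_of_toBlocks₂₁_eq_zero hNpar, arg_ofReal_of_nonneg hNeps.le]
  have hLMN : L (M * N) (iE 2) = arg (Jfac M (spAct N (iE 2))) := by
    rw [hL.2.2 _ (mul_mem hM hN), Jfac_mul_of_toBlocks₂₁_eq_zero M hNpar hNeps.ne'.isUnit,
      mul_comm, arg_real_mul _ hNeps]
  have hLM : L M (spAct N (iE 2)) = arg (Jfac M (spAct N (iE 2))) :=
    hL.eqOn_arg_of_toBlocks₂₁_eq_zero_or_im_ne_zero hM
      (hMK.elim (·.toBlocks₂₁_eq_zero_or_im_Jfac_ne_zero hM)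
        (·.toBlocks₂₁_eq_zero_or_im_Jfac_ne_zero hM))
      (spAct_iE_mem_siegelUHP hN hNpar)
  rw [wcoc, hLMN, hLM, hLN, sub_self, sub_zero, zero_div]
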